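/- There exists a path-connected topological space Y and starting points m, l ∈ Y such that in the lion-and-man game on Y the man has a strategy but the lion does not. -/

import Mathlib

/-!
The space is `X` with a real line attached at a point `m`, where `X` is a linear order without
maximum in which every sequence is bounded above, and whose open sets are the lower sets.
Projecting to the line, the man outruns the lion's shadow. Projecting to `X`, a lion strategy on
the wedge gives one on `X` with the lion starting at `l < m`. In `X` a path may jump upwards at a
time `c` provided it takes the higher value at `c` itself, and by no-lookahead the lion's position
at `c` cannot react to such a jump. The man's partial evasions, each avoiding the lion slightly
beyond its time, are ordered by extension; the glue of a chain is bounded (it is covered by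
countably many compact images), so past the supremum of the chain the man jumps above both it and
the lion. By Zorn's lemma there is a maximal evasion, contradicting the slack in its definition.
-/

/-- A continuous path `[0,∞) → X` starting at `x`. -/
def PathFrom (X : Type*) [TopologicalSpace X] (x : X) : Type _ :=
  {γ : NNReal → X // Continuous γ ∧ γ 0 = x}

/-- A strategy for the lion: man starts at `m`, lion at `l`; the lion captures the man
at some time, and the no-lookahead rule holds. -/
def IsLionStrategy {X : Type*} [TopologicalSpace X] (m l : X)
    (S : PathFrom X m → PathFrom X l) : Prop :=
  (∀ α : PathFrom X m, ∃ t : NNReal, (S α).1 t = α.1 t) ∧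
  (∀ (α α' : PathFrom X m) (t : NNReal),
    (∀ s < t, α.1 s = α'.1 s) → ∀ s ≤ t, (S α).1 s = (S α').1 s)

/-- A strategy for the man: man starts at `m`, lion at `l`; the man evades the lion
at all times, and the no-lookahead rule holds. -/
def IsManStrategy {X : Type*} [TopologicalSpace X] (m l : X)
    (S : PathFrom X l → PathFrom X m) : Prop :=
  (∀ (β : PathFrom X l) (t : NNReal), (S β).1 t ≠ β.1 t) ∧
  (∀ (β β' : PathFrom X l) (t : NNReal),
    (∀ s < t, β.1 s = β'.1 s) → ∀ s ≤ t, (S β).1 s = (S β').1 s)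

open Set Filter Topology Function
open scoped NNReal Hyperreal

namespace PathFrom

variable {X Y : Type*} [TopologicalSpace X] [TopologicalSpace Y] {x : X} {y : Y}

def map {f : X → Y} (hf : Continuous f) (hxy : f x = y) (α : PathFrom X x) :
    PathFrom Y y :=
  ⟨f ∘ α.1, hf.comp α.2.1, by rw [comp_apply, α.2.2, hxy]⟩

@[simp]
theorem map_apply {f : X → Y} (hf : Continuous f) (hxy : f x = y) (α : PathFrom X x)
    (t : ℝ≥0) : (α.map hf hxy).1 t = f (α.1 t) :=
  rfl

end PathFrom

theorem eq_of_eqOn_Iio {Z : Type*} [TopologicalSpace Z] [T2Space Z] {f g : ℝ≥0 → Z}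
    (hf : Continuous f) (hg : Continuous g) (h0 : f 0 = g 0) {t : ℝ≥0} (h : EqOn f g (Iio t)) :
    f t = g t := by
  rcases eq_or_ne t 0 with rfl | ht
  · exact h0
  · refine h.closure hf hg ?_
    rw [closure_Iio' ⟨0, pos_iff_ne_zero.2 ht⟩]
    exact self_mem_Iic

section Transfer

variable {X Y : Type*} [TopologicalSpace X] [TopologicalSpace Y]

theorem not_exists_isLionStrategy_of_leftInverse {i : X → Y} {r : Y → X} (hi : Continuous i)
    (hr : Continuous r) (hri : LeftInverse r i) {m l : X}
    (h : ¬ ∃ S : PathFrom X m → PathFrom X l, IsLionStrategy m l S) :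
    ¬ ∃ S : PathFrom Y (i m) → PathFrom Y (i l), IsLionStrategy (i m) (i l) S := by
  rintro ⟨S, hcapture, hcausal⟩
  refine h ⟨fun α => (S (α.map hi rfl)).map hr (hri l), fun α => ?_,
    fun α α' t hαα' s hs => ?_⟩
  · obtain ⟨t, ht⟩ := hcapture (α.map hi rfl)
    exact ⟨t, by simpa [hri _] using congrArg r ht⟩
  · exact congrArg r (hcausal _ _ t (fun s hs => congrArg i (hαα' s hs)) s hs)

/-- The man runs along the line at unit speed ahead of the lion's shadow `ρ ∘ β`; he can only
meet the lion at time `0`, where they are apart. -/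
theorem exists_isManStrategy_of_leftInverse {i : ℝ → Y} {ρ : Y → ℝ} (hi : Continuous i)
    (hρ : Continuous ρ) (hρi : LeftInverse ρ i) {l : Y} (hl : i (ρ l) ≠ l) :
    ∃ S : PathFrom Y l → PathFrom Y (i (ρ l)), IsManStrategy (i (ρ l)) l S := by
  refine ⟨fun β => ⟨fun t => i (ρ (β.1 t) + t), by have := β.2.1; fun_prop, ?_⟩, ?_, ?_⟩
  · simp [β.2.2]
  · intro β t h
    have ht : t = 0 := by simpa [hρi _] using congrArg ρ h
    subst ht
    exact hl (by simpa [β.2.2] using h)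
  · intro β β' t hββ' s hs
    have : ρ (β.1 s) = ρ (β'.1 s) :=
      eq_of_eqOn_Iio (hρ.comp β.2.1) (hρ.comp β'.2.1) (by simp [β.2.2, β'.2.2])
        fun u hu => congrArg ρ (hββ' u (hu.trans_le hs))
    simp only [this]

end Transfer

namespace Topology.IsLowerSet

variable {X : Type*} [Preorder X] [TopologicalSpace X] [Topology.IsLowerSet X]

theorem continuousAt_iff_eventually_le {A : Type*} [TopologicalSpace A] {f : A → X} {a : A} :
    ContinuousAt f a ↔ ∀ᶠ b in 𝓝 a, f b ≤ f a := by
  simp only [ContinuousAt, nhds_eq_principal_Iic, tendsto_principal, mem_Iic]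

theorem continuous_iff_eventually_le {A : Type*} [TopologicalSpace A] {f : A → X} :
    Continuous f ↔ ∀ a, ∀ᶠ b in 𝓝 a, f b ≤ f a := by
  simp only [continuous_iff_continuousAt, continuousAt_iff_eventually_le]

theorem bddAbove_of_isCompact [IsDirectedOrder X] [Nonempty X] {K : Set X} (hK : IsCompact K) :
    BddAbove K := by
  obtain ⟨t, hcover⟩ := hK.elim_finite_subcover (fun x : X => Iic x)
    (fun _ => isOpen_iff_isLowerSet.2 (isLowerSet_Iic _))
    (fun x _ => mem_iUnion.2 ⟨x, self_mem_Iic⟩)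
  exact (t.finite_toSet.bddAbove_biUnion.2 fun _ _ => bddAbove_Iic).mono hcover

protected theorem pathConnectedSpace [IsCodirectedOrder X] [Nonempty X] :
    PathConnectedSpace X where
  nonempty := inferInstance
  joined x y := by
    obtain ⟨z, hzx, hzy⟩ := exists_le_le x y
    have hx := (specializes_iff_le.2 hzx).joinedIn (mem_univ _) (mem_univ _)
    have hy := (specializes_iff_le.2 hzy).joinedIn (mem_univ _) (mem_univ _)
    exact hx.joined.symm.trans hy.joined

end Topology.IsLowerSet

theorem bddAbove_iUnion_of_forall_bddAbove_range {X : Type*} [Preorder X]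
    (hX : ∀ f : ℕ → X, BddAbove (range f)) {s : ℕ → Set X} (hs : ∀ n, BddAbove (s n)) :
    BddAbove (⋃ n, s n) := by
  choose b hb using hs
  obtain ⟨B, hB⟩ := hX b
  refine ⟨B, ?_⟩
  simp only [mem_upperBounds, mem_iUnion, forall_exists_index]
  exact fun x n hx => (hb n hx).trans (hB ⟨n, rfl⟩)

section Time

variable {X : Type*} [Preorder X] [TopologicalSpace X] [Topology.IsLowerSet X]

theorem continuous_ite_lt {T : Type*} [LinearOrder T] [TopologicalSpace T] [OrderTopology T]
    {g : T → X} {c : T} {v : X} (hg : ∀ s < c, ContinuousAt g s) (hv : ∀ s < c, g s ≤ v) :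
    Continuous fun s => if s < c then g s else v := by
  refine Topology.IsLowerSet.continuous_iff_eventually_le.2 fun t => ?_
  rcases lt_or_ge t c with ht | ht
  · filter_upwards [Iio_mem_nhds ht,
      Topology.IsLowerSet.continuousAt_iff_eventually_le.1 (hg t ht)] with s hsc hst
    rwa [if_pos (show s < c from hsc), if_pos ht]
  · refine Eventually.of_forall fun s => ?_
    simp only [not_lt.2 ht, if_false]
    split_ifs with hs
    exacts [hv s hs, le_rfl]

theorem exists_gt_forall_ne {f g : ℝ≥0 → X} {c : ℝ≥0} {v : X} (hf : Continuous f)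
    (hfv : f c < v) (hlt : ∀ t < c, f t ≠ g t) (hge : ∀ t, c ≤ t → v ≤ g t) :
    ∃ c' > c, ∀ t ≤ c', f t ≠ g t := by
  have hnear : ∀ᶠ t in 𝓝[≥] c, f t < v := nhdsWithin_le_nhds <|
    (Topology.IsLowerSet.continuous_iff_eventually_le.1 hf c).mono fun t ht => ht.trans_lt hfv
  obtain ⟨c', hcc', hIcc⟩ := mem_nhdsGE_iff_exists_Icc_subset.1 hnear
  refine ⟨c', hcc', fun t htc' => ?_⟩
  rcases lt_or_ge t c with htc | htc
  · exact hlt t htc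
  · exact ((hIcc ⟨htc, htc'⟩).trans_le (hge t htc)).ne

end Time

section Evasion

variable {X : Type*} [TopologicalSpace X] {m l : X}

structure Evasion (S : PathFrom X m → PathFrom X l) where
  time : ℝ≥0
  path : PathFrom X m
  exists_avoids : ∃ c > time, ∀ t ≤ c, (S path).1 t ≠ path.1 t

variable {S : PathFrom X m → PathFrom X l} {C : Set (Evasion S)} {p : Evasion S} {s t : ℝ≥0}

namespace Evasion

/-- Agreement is only asked for strictly before `a.time`: a limit evasion has to jump up at its
own time. -/
instance : Preorder (Evasion S) where
  le a b := a.time ≤ b.time ∧ ∀ t < a.time, b.path.1 t = a.path.1 t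
  le_refl _ := ⟨le_rfl, fun _ _ => rfl⟩
  le_trans _ _ _ hab hbc :=
    ⟨hab.1.trans hbc.1, fun t ht => (hbc.2 t (ht.trans_le hab.1)).trans (hab.2 t ht)⟩

theorem not_isMax (a : Evasion S) : ¬ IsMax a := by
  obtain ⟨c, hc, hac⟩ := a.exists_avoids
  obtain ⟨d, had, hdc⟩ := exists_between hc
  intro ha
  exact not_lt.2 (ha (b := ⟨d, a.path, c, hdc, hac⟩) ⟨had.le, fun _ _ => rfl⟩).1 had

theorem path_eq_of_isChain (hC : IsChain (· ≤ ·) C) {q : Evasion S} (hp : p ∈ C)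
    (hq : q ∈ C) (hsp : s < p.time) (hsq : s < q.time) : p.path.1 s = q.path.1 s := by
  rcases eq_or_ne p q with rfl | hne
  · rfl
  rcases hC hp hq hne with h | h
  exacts [(h.2 s hsp).symm, h.2 s hsq]

open Classical in
/-- The value `m` past all times of `C` is junk. -/
noncomputable def glue (C : Set (Evasion S)) (s : ℝ≥0) : X :=
  if h : ∃ p ∈ C, s < p.time then h.choose.path.1 s else m

theorem glue_eq (hC : IsChain (· ≤ ·) C) (hp : p ∈ C) (hs : s < p.time) :
    glue C s = p.path.1 s := by
  have h : ∃ p ∈ C, s < p.time := ⟨p, hp, hs⟩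
  rw [glue, dif_pos h]
  exact path_eq_of_isChain hC h.choose_spec.1 hp h.choose_spec.2 hs

theorem continuousAt_glue (hC : IsChain (· ≤ ·) C) (hp : p ∈ C) (hs : s < p.time) :
    ContinuousAt (glue C) s :=
  p.path.2.1.continuousAt.congr <|
    eventually_of_mem (Iio_mem_nhds hs) fun _ hu => (glue_eq hC hp hu).symm

theorem avoids_of_eqOn_glue (hS : IsLionStrategy m l S) (hC : IsChain (· ≤ ·) C) (hp : p ∈ C)
    (ht : t < p.time) {α : PathFrom X m} (hα : ∀ s ≤ t, α.1 s = glue C s) :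
    (S α).1 t ≠ α.1 t := by
  have hαp : ∀ s ≤ t, α.1 s = p.path.1 s := fun s hs =>
    (hα s hs).trans (glue_eq hC hp (hs.trans_lt ht))
  obtain ⟨c, hc, hpc⟩ := p.exists_avoids
  rw [hS.2 α p.path t (fun s hs => hαp s hs.le) t le_rfl, hαp t le_rfl]
  exact hpc t (ht.trans hc).le

theorem not_forall_exists_lt_time (hS : IsLionStrategy m l S) (hC : IsChain (· ≤ ·) C) :
    ¬ ∀ t, ∃ p ∈ C, t < p.time := by
  intro h
  have hcont : Continuous (glue C) := continuous_iff_continuousAt.2 fun t =>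
    let ⟨_, hp, ht⟩ := h t
    continuousAt_glue hC hp ht
  obtain ⟨p, hp, hp0⟩ := h 0
  let α : PathFrom X m := ⟨glue C, hcont, (glue_eq hC hp hp0).trans p.path.2.2⟩
  obtain ⟨t, ht⟩ := hS.1 α
  obtain ⟨q, hq, htq⟩ := h t
  exact avoids_of_eqOn_glue hS hC hq htq (α := α) (fun _ _ => rfl) ht

end Evasion

variable [Preorder X] [Topology.IsLowerSet X]

namespace Evasion

theorem nonempty (hlm : l < m) : Nonempty (Evasion S) := by
  let α : PathFrom X m := ⟨fun _ => m, continuous_const, rfl⟩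
  obtain ⟨c, hc, hαc⟩ := exists_gt_forall_ne (g := α.1) (S α).2.1
    ((S α).2.2.trans_lt hlm) (fun _ ht => (not_lt_zero ht).elim) fun _ _ => le_rfl
  exact ⟨⟨0, α, c, hc, hαc⟩⟩

theorem bddAbove_glue [IsDirectedOrder X] (hX : ∀ f : ℕ → X, BddAbove (range f))
    (hC : IsChain (· ≤ ·) C) (hne : C.Nonempty) (hbdd : BddAbove (time '' C)) :
    BddAbove (glue C '' Iio (sSup (time '' C))) := by
  have : Nonempty X := ⟨m⟩
  obtain ⟨u, -, hu, huC⟩ := exists_seq_tendsto_sSup (hne.image time) hbdd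
  choose p hpC hpu using huC
  have hpiece (n : ℕ) : BddAbove ((p n).path.1 '' Icc 0 (p n).time) :=
    Topology.IsLowerSet.bddAbove_of_isCompact (isCompact_Icc.image (p n).path.2.1)
  refine (bddAbove_iUnion_of_forall_bddAbove_range hX hpiece).mono ?_
  rintro _ ⟨s, hs, rfl⟩
  obtain ⟨n, hn⟩ := (hu.eventually (lt_mem_nhds hs)).exists
  rw [← hpu n] at hn
  exact mem_iUnion.2 ⟨n, s, ⟨zero_le, hn.le⟩, (glue_eq hC (hpC n) hn).symm⟩

theorem exists_path_extending_glue (hC : IsChain (· ≤ ·) C) {c : ℝ≥0} (hc : 0 < c)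
    (hcC : ∀ s < c, ∃ p ∈ C, s < p.time) {v : X} (hv : ∀ s < c, glue C s ≤ v) :
    ∃ α : PathFrom X m, (∀ s < c, α.1 s = glue C s) ∧ ∀ s, c ≤ s → α.1 s = v := by
  obtain ⟨p, hp, hp0⟩ := hcC 0 hc
  have hcont := continuous_ite_lt (fun s hs => let ⟨_, hp, hsp⟩ := hcC s hs
    continuousAt_glue hC hp hsp) hv
  refine ⟨⟨_, hcont, ?_⟩, fun s hs => if_pos hs, fun s hs => if_neg (not_lt.2 hs)⟩
  simp only [if_pos hc]
  exact (glue_eq hC hp hp0).trans p.path.2.2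

/-- Limit step: past the supremum `c` of the times the man jumps to a height `v` above both the
glued path and the lion's position at `c`, which does not depend on `v`. -/
theorem bddAbove_of_bddAbove_time [IsDirectedOrder X] [NoMaxOrder X]
    (hX : ∀ f : ℕ → X, BddAbove (range f)) (hS : IsLionStrategy m l S) (hC : IsChain (· ≤ ·) C)
    (hne : C.Nonempty) (hbdd : BddAbove (time '' C)) : BddAbove C := by
  set c := sSup (time '' C)
  have hle : ∀ p ∈ C, p.time ≤ c := fun p hp => le_csSup hbdd ⟨p, hp, rfl⟩
  rcases eq_zero_or_pos c with hc | hc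
  · have h0 : ∀ a ∈ C, a.time = 0 := fun a ha => le_antisymm (hc ▸ hle a ha) zero_le
    obtain ⟨p, hp⟩ := hne
    exact ⟨p, fun a ha => ⟨(h0 a ha).trans_le zero_le, fun t ht => by simp [h0 a ha] at ht⟩⟩
  have hcC : ∀ s < c, ∃ p ∈ C, s < p.time := fun s hs => by
    obtain ⟨_, ⟨p, hp, rfl⟩, hsp⟩ := exists_lt_of_lt_csSup (hne.image _) hs
    exact ⟨p, hp, hsp⟩
  obtain ⟨B, hB⟩ := bddAbove_glue hX hC hne hbdd
  have hBglue : ∀ s < c, glue C s ≤ B := fun s hs => hB ⟨s, hs, rfl⟩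
  obtain ⟨αB, hαB, -⟩ := exists_path_extending_glue hC hc hcC hBglue
  obtain ⟨w, hBw, hLw⟩ := exists_ge_ge B ((S αB).1 c)
  obtain ⟨v, hv⟩ := exists_gt w
  obtain ⟨α, hα, hαv⟩ := exists_path_extending_glue hC hc hcC fun s hs =>
    (hBglue s hs).trans (hBw.trans hv.le)
  have hlion : (S α).1 c = (S αB).1 c :=
    hS.2 α αB c (fun s hs => (hα s hs).trans (hαB s hs).symm) c le_rfl
  obtain ⟨c', hc', hαc'⟩ := exists_gt_forall_ne (g := α.1) (S α).2.1
    (hlion ▸ hLw.trans_lt hv)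
    (fun t ht => let ⟨_, hp, htp⟩ := hcC t ht
      avoids_of_eqOn_glue hS hC hp htp fun s hs => hα s (hs.trans_lt ht))
    (fun t ht => (hαv t ht).ge)
  exact ⟨⟨c, α, c', hc', hαc'⟩, fun a ha =>
    ⟨hle a ha, fun t ht => (hα t (ht.trans_le (hle a ha))).trans (glue_eq hC ha ht)⟩⟩

theorem bddAbove_of_isChain [IsDirectedOrder X] [NoMaxOrder X]
    (hX : ∀ f : ℕ → X, BddAbove (range f)) (hS : IsLionStrategy m l S) (hC : IsChain (· ≤ ·) C)
    (hne : C.Nonempty) : BddAbove C := by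
  refine bddAbove_of_bddAbove_time hX hS hC hne (by_contra fun h => ?_)
  refine not_forall_exists_lt_time hS hC fun t => ?_
  obtain ⟨_, ⟨p, hp, rfl⟩, htp⟩ := not_bddAbove_iff.1 h t
  exact ⟨p, hp, htp⟩

end Evasion

theorem not_exists_isLionStrategy [IsDirectedOrder X] [NoMaxOrder X]
    (hX : ∀ f : ℕ → X, BddAbove (range f)) (hlm : l < m) :
    ¬ ∃ S : PathFrom X m → PathFrom X l, IsLionStrategy m l S := by
  rintro ⟨S, hS⟩
  have := Evasion.nonempty (S := S) hlm
  obtain ⟨M, hM⟩ := zorn_le_nonempty fun C hC hne => Evasion.bddAbove_of_isChain hX hS hC hne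
  exact M.not_isMax hM

end Evasion

/-- `X` with a real line attached at `x₀`, realised as the cross `X × {0} ∪ {x₀} × ℝ`. -/
def LineWedge (X : Type*) (x₀ : X) : Type _ := {p : X × ℝ // p.2 = 0 ∨ p.1 = x₀}

namespace LineWedge

variable {X : Type*} {x₀ : X}

def inl (x : X) : LineWedge X x₀ := ⟨(x, 0), .inl rfl⟩

def inr (r : ℝ) : LineWedge X x₀ := ⟨(x₀, r), .inr rfl⟩

def fst (p : LineWedge X x₀) : X := p.1.1

def snd (p : LineWedge X x₀) : ℝ := p.1.2

theorem leftInverse_fst_inl : LeftInverse (fst : LineWedge X x₀ → X) inl := fun _ => rfl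

theorem leftInverse_snd_inr : LeftInverse (snd : LineWedge X x₀ → ℝ) inr := fun _ => rfl

variable [TopologicalSpace X]

instance : TopologicalSpace (LineWedge X x₀) := instTopologicalSpaceSubtype

theorem continuous_inl : Continuous (inl : X → LineWedge X x₀) :=
  (continuous_id.prodMk continuous_const).subtype_mk _

theorem continuous_inr : Continuous (inr : ℝ → LineWedge X x₀) :=
  (continuous_const.prodMk continuous_id).subtype_mk _

protected theorem continuous_fst : Continuous (fst : LineWedge X x₀ → X) :=
  continuous_fst.comp continuous_subtype_val

protected theorem continuous_snd : Continuous (snd : LineWedge X x₀ → ℝ) :=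
  continuous_snd.comp continuous_subtype_val

instance [PathConnectedSpace X] : PathConnectedSpace (LineWedge X x₀) := by
  have hcover : range inl ∪ range inr = (univ : Set (LineWedge X x₀)) := by
    refine eq_univ_of_forall fun p => p.2.imp
      (fun h => ⟨p.fst, Subtype.ext (Prod.ext rfl h.symm)⟩)
      fun h => ⟨p.snd, Subtype.ext (Prod.ext h.symm rfl)⟩
  rw [pathConnectedSpace_iff_univ, ← hcover]
  exact (isPathConnected_range continuous_inl).union (isPathConnected_range continuous_inr)
    ⟨inl x₀, ⟨x₀, rfl⟩, 0, rfl⟩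

end LineWedge

theorem Hyperreal.bddAbove_range (f : ℕ → ℝ*) : BddAbove (range f) := by
  choose F hF using fun k => ofSeq_surjective (f k)
  refine ⟨ofSeq fun n => (Finset.range (n + 1)).sup' Finset.nonempty_range_add_one (F · n), ?_⟩
  rintro _ ⟨k, rfl⟩
  rw [← hF k, ofSeq_le_ofSeq]
  filter_upwards [Nat.hyperfilter_le_atTop (eventually_ge_atTop k)] with n hn
  exact Finset.le_sup' (F · n) (Finset.mem_range_succ_iff.2 hn)

/-- A stand-in for the paper's well-ordered space (such as `ω₁`): all that matters is that every
sequence is bounded above. -/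
def LowerHyperreal : Type := ℝ*

noncomputable instance : LinearOrder LowerHyperreal := inferInstanceAs (LinearOrder ℝ*)

instance : Nontrivial LowerHyperreal := inferInstanceAs (Nontrivial ℝ*)

instance : NoMaxOrder LowerHyperreal := inferInstanceAs (NoMaxOrder ℝ*)

noncomputable instance : TopologicalSpace LowerHyperreal := Topology.lowerSet LowerHyperreal

instance : Topology.IsLowerSet LowerHyperreal := ⟨rfl⟩

instance : PathConnectedSpace LowerHyperreal := Topology.IsLowerSet.pathConnectedSpace

/-- There is a path-connected space and starting points for which the man
has a strategy but the lion does not. -/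
theorem stmt_14 : ∃ (Y : Type) (t : TopologicalSpace Y),
    @PathConnectedSpace Y t ∧ ∃ m l : Y,
      (∃ S : @PathFrom Y t l → @PathFrom Y t m, @IsManStrategy Y t m l S) ∧
      ¬ ∃ S : @PathFrom Y t m → @PathFrom Y t l, @IsLionStrategy Y t m l S := by
  obtain ⟨l, m, hlm⟩ := exists_pair_lt LowerHyperreal
  refine ⟨LineWedge LowerHyperreal m, inferInstance, inferInstance, .inl m, .inl l, ?_, ?_⟩
  · exact exists_isManStrategy_of_leftInverse LineWedge.continuous_inr LineWedge.continuous_snd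
      LineWedge.leftInverse_snd_inr (LineWedge.leftInverse_fst_inl.injective.ne hlm.ne')
  · exact not_exists_isLionStrategy_of_leftInverse LineWedge.continuous_inl
      LineWedge.continuous_fst LineWedge.leftInverse_fst_inl
      (not_exists_isLionStrategy Hyperreal.bddAbove_range hlm)
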